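/- arXiv:2602.04324 — 3 statements merged into one kernel-verified Lean document; each statement's English description precedes it below -/
import Mathlib

section
/- Let k ≥ 2 and let P_k denote the directed path on k vertices v_1, …, v_k with arcs v_1→v_2, v_2→v_3, …, v_{k−1}→v_k. Then for every n, exo(n, P_k) = e(T(n, k−1)), the number of edges of the Turán graph T(n, k−1). -/
/-- An oriented graph `G` contains a copy of the oriented graph `F`. -/
def Copies {α β : Type*} (F : α → α → Prop) (G : β → β → Prop) : Prop :=
  ∃ f : α → β, Function.Injective f ∧ ∀ a b, F a b → G (f a) (f b)

/-- The oriented Turán number. -/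
noncomputable def exo {α : Type*} (n : ℕ) (F : α → α → Prop) : ℕ :=
  sSup {m : ℕ | ∃ G : Fin n → Fin n → Prop,
    (∀ v, ¬ G v v) ∧ (∀ u v, G u v → ¬ G v u) ∧
    ¬ Copies F G ∧ {p : Fin n × Fin n | G p.1 p.2}.ncard = m}

/-- The number of edges of the Turán graph `T(n,k)`. -/
noncomputable def eTuran (n k : ℕ) : ℕ := (SimpleGraph.turanGraph n k).edgeSet.ncard

/-!
Upper bound (Gallai–Roy): in a `P_k`-free oriented graph `G`, take a maximal acyclic set `D` of
arcs and colour each vertex by the length of the longest `D`-path ending there. Arcs of `D`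
strictly increase the colour; an arc `u → v` outside `D` closes a cycle with a `D`-path from `v`
to `u`, so it joins distinct colours as well. Every `D`-path is a path of `G`, hence has at most
`k - 2` arcs, and the underlying graph of `G` is `(k-1)`-colourable, so `K_k`-free, and Turán's
theorem bounds its edges. Lower bound: orienting `T(n, k-1)` from lower to higher part index
gives an oriented graph whose directed paths have at most `k - 1` vertices.
-/

open Relation SetRel Function

variable {V : Type*}

def dirPath (k : ℕ) : Fin k → Fin k → Prop := fun i j => (i : ℕ) + 1 = j

namespace SetRel

def IsAcyclic (D : SetRel V V) : Prop := ∀ v, ¬ TransGen (· ~[D] ·) v v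

/-- Junk value `0` when the `D`-series ending at `v` have unbounded length; the lemmas about it
assume a uniform bound. -/
noncomputable def height (D : SetRel V V) (v : V) : ℕ :=
  sSup {m | ∃ s : RelSeries D, s.length = m ∧ s.last = v}

lemma isAcyclic_empty : (∅ : SetRel V V).IsAcyclic := fun _ h => by
  obtain ⟨_, hempty, -⟩ := TransGen.head'_iff.mp h
  exact hempty

lemma transGen_insert_cases {D : SetRel V V} {u v a b : V}
    (h : TransGen (· ~[insert (u, v) D] ·) a b) :
    TransGen (· ~[D] ·) a b ∨ ReflTransGen (· ~[D] ·) a u ∧ ReflTransGen (· ~[D] ·) v b := by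
  induction h with
  | single hab =>
    obtain ⟨rfl, rfl⟩ | hab := by simpa only [Set.mem_insert_iff, Prod.mk.injEq] using hab
    · exact .inr ⟨.refl, .refl⟩
    · exact .inl (.single hab)
  | tail _ hbc ih =>
    obtain ⟨rfl, rfl⟩ | hbc := by simpa only [Set.mem_insert_iff, Prod.mk.injEq] using hbc
    · exact .inr ⟨ih.elim TransGen.to_reflTransGen And.left, .refl⟩
    · exact ih.imp (·.tail hbc) fun ⟨hau, hvb⟩ => ⟨hau, hvb.tail hbc⟩

lemma IsAcyclic.insert {D : SetRel V V} (hD : D.IsAcyclic) {u v : V}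
    (hvu : ¬ ReflTransGen (· ~[D] ·) v u) : (insert (u, v) D).IsAcyclic := fun x hx =>
  (transGen_insert_cases hx).elim (hD x) fun ⟨hxu, hvx⟩ => hvu (hvx.trans hxu)

lemma rel_or_reflTransGen_of_maximal {G D : SetRel V V}
    (hD : Maximal (fun D : SetRel V V => D ⊆ G ∧ D.IsAcyclic) D) {u v : V} (huv : u ~[G] v) :
    u ~[D] v ∨ ReflTransGen (· ~[D] ·) v u := by
  by_contra! ⟨hnot, hvu⟩
  exact hnot (hD.2 ⟨Set.insert_subset huv hD.1.1, hD.1.2.insert hvu⟩ (Set.subset_insert _ _)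
    (Set.mem_insert _ _))

lemma IsAcyclic.injective_relSeries {D : SetRel V V} (hD : D.IsAcyclic) (s : RelSeries D) :
    Injective s := by
  have hlt : ∀ {i j}, i < j → TransGen (· ~[D] ·) (s i) (s j) := fun h =>
    (Fin.liftFun_iff_succ (TransGen (· ~[D] ·))).mpr (fun i => .single (s.step i)) h
  intro i j hij
  by_contra hne
  rcases lt_or_gt_of_ne hne with h | h <;> exact hD _ (hij ▸ hlt h)

section height

variable {D : SetRel V V} {L : ℕ} (hL : ∀ s : RelSeries D, s.length ≤ L)
include hL

lemma exists_relSeries_length_eq_height (v : V) :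
    ∃ s : RelSeries D, s.length = D.height v ∧ s.last = v :=
  Nat.sSup_mem (s := {m | ∃ s : RelSeries D, s.length = m ∧ s.last = v})
    ⟨0, RelSeries.singleton D v, rfl, rfl⟩ ⟨L, by rintro _ ⟨s, rfl, -⟩; exact hL s⟩

lemma length_le_height (s : RelSeries D) : s.length ≤ D.height s.last :=
  le_csSup ⟨L, by rintro _ ⟨s, rfl, -⟩; exact hL s⟩ ⟨s, rfl, rfl⟩

lemma height_le (v : V) : D.height v ≤ L := by
  obtain ⟨s, hs, -⟩ := exists_relSeries_length_eq_height hL v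
  exact hs ▸ hL s

lemma height_lt_height {u v : V} (huv : u ~[D] v) : D.height u < D.height v := by
  obtain ⟨s, hs, rfl⟩ := exists_relSeries_length_eq_height hL u
  calc D.height s.last = s.length := hs.symm
    _ < (s.snoc v huv).length := by simp
    _ ≤ D.height v := by simpa using length_le_height hL (s.snoc v huv)

lemma height_le_height {u v : V} (huv : ReflTransGen (· ~[D] ·) u v) :
    D.height u ≤ D.height v := by
  induction huv with
  | refl => exact le_rfl
  | tail _ hbc ih => exact ih.trans (height_lt_height hL hbc).le

end height

end SetRel

theorem SimpleGraph.colorable_fromRel_of_relSeries_length_le [Finite V] {G : SetRel V V} {L : ℕ}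
    (hL : ∀ s : RelSeries G, Injective s → s.length ≤ L) :
    (SimpleGraph.fromRel (· ~[G] ·)).Colorable (L + 1) := by
  obtain ⟨D, -, hD⟩ := Finite.exists_le_maximal
    (p := fun D : SetRel V V => D ⊆ G ∧ D.IsAcyclic) (a := ∅) ⟨Set.empty_subset _, isAcyclic_empty⟩
  have hDL : ∀ s : RelSeries D, s.length ≤ L := fun s =>
    hL (s.ofLE hD.1.1) (hD.1.2.injective_relSeries s)
  have hne : ∀ {u v}, u ≠ v → u ~[G] v → D.height u ≠ D.height v := by
    intro u v hne huv
    rcases rel_or_reflTransGen_of_maximal hD huv with h | h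
    · exact (height_lt_height hDL h).ne
    · rcases h.cases_head with rfl | ⟨w, hvw, hwu⟩
      · exact absurd rfl hne
      · exact ((height_lt_height hDL hvw).trans_le (height_le_height hDL hwu)).ne'
  refine ⟨.mk (fun v => ⟨D.height v, Nat.lt_succ_of_le (height_le hDL v)⟩) ?_⟩
  rintro u v ⟨huv, h | h⟩ heq
  · exact hne huv h (Fin.val_eq_of_eq heq)
  · exact hne (Ne.symm huv) h (Fin.val_eq_of_eq heq).symm

lemma copies_dirPath_of_relSeries {G : V → V → Prop} {k : ℕ}
    (s : RelSeries {p : V × V | G p.1 p.2}) (hs : Injective s) (hk : k ≤ s.length + 1) :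
    Copies (dirPath k) G := by
  refine ⟨s ∘ Fin.castLE hk, hs.comp (Fin.castLE_injective hk), ?_⟩
  rintro i j (hij : (i : ℕ) + 1 = j)
  have hi : (i : ℕ) < s.length := by omega
  have hi' : Fin.castLE hk i = (⟨i, hi⟩ : Fin s.length).castSucc := Fin.ext rfl
  have hj' : Fin.castLE hk j = (⟨i, hi⟩ : Fin s.length).succ := Fin.ext (by simp [hij])
  rw [comp_apply, comp_apply, hi', hj']
  exact s.step ⟨i, hi⟩

lemma not_copies_dirPath_of_lt {G : V → V → Prop} {m : ℕ} (c : V → ℕ)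
    (hG : ∀ u v, G u v → c u < c v) (hc : ∀ v, c v < m) : ¬ Copies (dirPath (m + 1)) G := by
  rintro ⟨f, -, hf⟩
  have hclimb : ∀ i : Fin (m + 1), (i : ℕ) ≤ c (f i) := by
    refine Fin.induction (Nat.zero_le _) fun i ih => ?_
    have := hG _ _ (hf i.castSucc i.succ (by simp [dirPath]))
    simp only [Fin.val_castSucc, Fin.val_succ] at ih ⊢
    omega
  exact (hclimb (Fin.last m)).not_gt (by simpa using hc (f (Fin.last m)))

lemma ncard_setOf_eq_ncard_edgeSet_fromRel {G : V → V → Prop}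
    (hasym : ∀ u v, G u v → ¬ G v u) :
    {p : V × V | G p.1 p.2}.ncard = (SimpleGraph.fromRel G).edgeSet.ncard := by
  have hne : ∀ {a b}, G a b → a ≠ b := fun h e => by subst e; exact hasym _ _ h h
  have himage : (fun p : V × V => s(p.1, p.2)) '' {p | G p.1 p.2} =
      (SimpleGraph.fromRel G).edgeSet := by
    ext e
    induction e using Sym2.ind with
    | _ u v =>
      rw [SimpleGraph.mem_edgeSet, SimpleGraph.fromRel_adj]
      constructor
      · rintro ⟨⟨a, b⟩, hab, he⟩
        rcases Sym2.eq_iff.mp he with ⟨rfl, rfl⟩ | ⟨rfl, rfl⟩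
        · exact ⟨hne hab, .inl hab⟩
        · exact ⟨(hne hab).symm, .inr hab⟩
      · rintro ⟨-, h | h⟩
        · exact ⟨(u, v), h, rfl⟩
        · exact ⟨(v, u), h, Sym2.eq_swap⟩
  rw [← himage, Set.InjOn.ncard_image]
  rintro ⟨a, b⟩ hab ⟨c, d⟩ hcd h
  rcases Sym2.eq_iff.mp h with ⟨rfl, rfl⟩ | ⟨rfl, rfl⟩
  · rfl
  · exact (hasym _ _ hab hcd).elim

lemma turanGraph_eq_fromRel (n r : ℕ) :
    SimpleGraph.turanGraph n r = SimpleGraph.fromRel fun u v : Fin n => (u : ℕ) % r < v % r := by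
  ext u v
  rw [SimpleGraph.turanGraph_adj, SimpleGraph.fromRel_adj]
  exact ⟨fun h => ⟨fun e => h (e ▸ rfl), lt_or_gt_of_ne h⟩, by rintro ⟨-, h | h⟩ <;> omega⟩

lemma ncard_setOf_le_eTuran {n m : ℕ} {G : Fin n → Fin n → Prop}
    (hasym : ∀ u v, G u v → ¬ G v u) (hfree : ¬ Copies (dirPath (m + 2)) G) :
    {p : Fin n × Fin n | G p.1 p.2}.ncard ≤ eTuran n (m + 1) := by
  classical
  have hcol : (SimpleGraph.fromRel G).Colorable (m + 1) :=
    SimpleGraph.colorable_fromRel_of_relSeries_length_le (G := {p | G p.1 p.2}) fun s hs =>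
      not_lt.mp fun hlt => hfree (copies_dirPath_of_relSeries s hs (by omega))
  rw [ncard_setOf_eq_ncard_edgeSet_fromRel hasym, eTuran, ← SimpleGraph.coe_edgeFinset,
    ← SimpleGraph.coe_edgeFinset, Set.ncard_coe_finset, Set.ncard_coe_finset]
  exact (SimpleGraph.isTuranMaximal_turanGraph m.succ_pos).2 (hcol.cliqueFree (by omega))

lemma exo_eq_of_extremal {α : Type*} {n m : ℕ} {F : α → α → Prop} (G : Fin n → Fin n → Prop)
    (hirr : ∀ v, ¬ G v v) (hasym : ∀ u v, G u v → ¬ G v u) (hfree : ¬ Copies F G)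
    (hG : {p : Fin n × Fin n | G p.1 p.2}.ncard = m)
    (hle : ∀ H : Fin n → Fin n → Prop, (∀ v, ¬ H v v) → (∀ u v, H u v → ¬ H v u) →
      ¬ Copies F H → {p : Fin n × Fin n | H p.1 p.2}.ncard ≤ m) :
    exo n F = m :=
  IsGreatest.csSup_eq ⟨⟨G, hirr, hasym, hfree, hG⟩, by
    rintro _ ⟨H, hHirr, hHasym, hHfree, rfl⟩; exact hle H hHirr hHasym hHfree⟩

/-- for the directed path on `k ≥ 2` vertices (arcs `i → i+1`),
`exo(n, P_k) = e(T(n, k-1))` for every `n`. -/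
theorem stmt_3 (k : ℕ) (hk : 2 ≤ k) (n : ℕ) :
    exo n (fun i j : Fin k => (i : ℕ) + 1 = (j : ℕ)) = eTuran n (k - 1) := by
  obtain ⟨m, rfl⟩ : ∃ m, k = m + 2 := ⟨k - 2, by omega⟩
  show exo n (dirPath (m + 2)) = eTuran n (m + 1)
  let G₀ : Fin n → Fin n → Prop := fun u v => (u : ℕ) % (m + 1) < v % (m + 1)
  have hasym : ∀ u v, G₀ u v → ¬ G₀ v u := fun _ _ => lt_asymm
  refine exo_eq_of_extremal G₀ (fun _ => lt_irrefl _) hasym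
    (not_copies_dirPath_of_lt _ (fun _ _ h => h) fun _ => Nat.mod_lt _ m.succ_pos) ?_
    fun _ _ hasym' hfree => ncard_setOf_le_eTuran hasym' hfree
  rw [ncard_setOf_eq_ncard_edgeSet_fromRel hasym, eTuran, turanGraph_eq_fromRel]
end

section
/- Let F be the oriented graph on four vertices v_1, v_2, v_3, v_4 with arcs v_1→v_2, v_2→v_3, v_3→v_4 and v_1→v_4 (an orientation of the 4-cycle). Then for every n, exo(n, F) = e(T(n, 3)), the number of edges of the Turán graph T(n, 3). -/
/-- The orientation of `C₄` with arcs `v₁→v₂, v₂→v₃, v₃→v₄, v₁→v₄`. -/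
def orientedC4 (i j : Fin 4) : Prop :=
  (i = 0 ∧ j = 1) ∨ (i = 1 ∧ j = 2) ∨ (i = 2 ∧ j = 3) ∨ (i = 0 ∧ j = 3)

/-! Every tournament on four vertices contains `orientedC4`, so the underlying graph of an
`orientedC4`-free oriented graph is `K₄`-free, and by Turán's theorem it has at most `e(T(n,3))`
edges; by asymmetry its arcs are in bijection with these edges. Conversely, orienting `T(n,3)`
cyclically between its parts gives an `orientedC4`-free oriented graph with `e(T(n,3))` arcs. -/

theorem Copies.trans {α β γ : Type*} {F : α → α → Prop} {G : β → β → Prop} {H : γ → γ → Prop}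
    (hFG : Copies F G) (hGH : Copies G H) : Copies F H := by
  obtain ⟨f, hf, hfG⟩ := hFG
  obtain ⟨g, hg, hgH⟩ := hGH
  exact ⟨g ∘ f, hg.comp hf, fun a b h => hgH _ _ (hfG a b h)⟩

def tournamentOfBits (b₀₁ b₀₂ b₀₃ b₁₂ b₁₃ b₂₃ : Bool) : Fin 4 → Fin 4 → Bool :=
  ![![false, b₀₁, b₀₂, b₀₃],
    ![!b₀₁, false, b₁₂, b₁₃],
    ![!b₀₂, !b₁₂, false, b₂₃],
    ![!b₀₃, !b₁₃, !b₂₃, false]]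

theorem copies_orientedC4_tournamentOfBits :
    ∀ b₀₁ b₀₂ b₀₃ b₁₂ b₁₃ b₂₃ : Bool,
      Copies orientedC4 (tournamentOfBits b₀₁ b₀₂ b₀₃ b₁₂ b₁₃ b₂₃ · · = true) := by
  unfold Copies orientedC4
  decide +kernel

theorem copies_orientedC4_of_total (T : Fin 4 → Fin 4 → Prop)
    (hT : ∀ i j, i ≠ j → T i j ∨ T j i) : Copies orientedC4 T := by
  classical
  refine (copies_orientedC4_tournamentOfBits (T 0 1) (T 0 2) (T 0 3) (T 1 2) (T 1 3) (T 2 3)).trans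
    ⟨id, Function.injective_id, fun i j h => ?_⟩
  fin_cases i <;> fin_cases j
  all_goals first
    | exact absurd h Bool.false_ne_true
    | exact of_decide_eq_true h
    | exact (hT _ _ (by decide)).resolve_left fun h' => by simp_all [tournamentOfBits]

theorem cliqueFree_fromRel_of_not_copies_orientedC4 {V : Type*} {G : V → V → Prop}
    (hF : ¬ Copies orientedC4 G) : (SimpleGraph.fromRel G).CliqueFree 4 := by
  rw [SimpleGraph.cliqueFree_iff]
  refine ⟨fun e => hF ?_⟩
  refine (copies_orientedC4_of_total (fun i j => G (e i) (e j)) fun i j hij => ?_).trans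
    ⟨e, e.injective, fun _ _ h => h⟩
  exact ((SimpleGraph.fromRel_adj G _ _).1 (e.toHom.map_adj hij)).2

theorem ncard_arcs_eq_ncard_edgeSet_fromRel {V : Type*} {G : V → V → Prop}
    (hG : ∀ u v, G u v → ¬ G v u) :
    {p : V × V | G p.1 p.2}.ncard = (SimpleGraph.fromRel G).edgeSet.ncard := by
  have hne : ∀ u v, G u v → u ≠ v := by
    rintro u _ huv rfl
    exact hG u u huv huv
  have himage : (fun p : V × V => s(p.1, p.2)) '' {p | G p.1 p.2} =
      (SimpleGraph.fromRel G).edgeSet := by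
    ext e
    induction e using Sym2.ind with
    | _ u v =>
      rw [SimpleGraph.mem_edgeSet, SimpleGraph.fromRel_adj]
      constructor
      · rintro ⟨⟨a, b⟩, hab, he⟩
        rcases Sym2.eq_iff.1 he with ⟨rfl, rfl⟩ | ⟨rfl, rfl⟩
        · exact ⟨hne _ _ hab, .inl hab⟩
        · exact ⟨(hne _ _ hab).symm, .inr hab⟩
      · rintro ⟨-, huv | hvu⟩
        · exact ⟨(u, v), huv, rfl⟩
        · exact ⟨(v, u), hvu, Sym2.eq_swap⟩
  rw [← himage, Set.InjOn.ncard_image]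
  rintro ⟨a, b⟩ hab ⟨c, d⟩ hcd h
  rcases Sym2.eq_iff.1 h with ⟨rfl, rfl⟩ | ⟨rfl, rfl⟩
  · rfl
  · exact absurd hcd (hG _ _ hab)

theorem ncard_arcs_le_eTuran {n : ℕ} {G : Fin n → Fin n → Prop} (hG : ∀ u v, G u v → ¬ G v u)
    (hF : ¬ Copies orientedC4 G) : {p : Fin n × Fin n | G p.1 p.2}.ncard ≤ eTuran n 3 := by
  classical
  rw [ncard_arcs_eq_ncard_edgeSet_fromRel hG, eTuran, ← SimpleGraph.coe_edgeFinset,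
    ← SimpleGraph.coe_edgeFinset, Set.ncard_coe_finset, Set.ncard_coe_finset]
  exact (SimpleGraph.isTuranMaximal_turanGraph (by norm_num)).2
    (cliqueFree_fromRel_of_not_copies_orientedC4 hF)

def cyclicTuranOrientation (n : ℕ) (u v : Fin n) : Prop := ((u : ℕ) + 1) % 3 = (v : ℕ) % 3

theorem cyclicTuranOrientation_asymm {n : ℕ} (u v : Fin n) :
    cyclicTuranOrientation n u v → ¬ cyclicTuranOrientation n v u := by
  unfold cyclicTuranOrientation
  omega

theorem fromRel_cyclicTuranOrientation (n : ℕ) :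
    SimpleGraph.fromRel (cyclicTuranOrientation n) = SimpleGraph.turanGraph n 3 := by
  ext u v
  rw [SimpleGraph.fromRel_adj, SimpleGraph.turanGraph_adj, ne_eq, Fin.ext_iff]
  unfold cyclicTuranOrientation
  omega

/- Every arc raises the residue mod 3 by one, so the path `0 → 1 → 2 → 3` raises it by `3 ≡ 0`
while the arc `0 → 3` raises it by one. -/
theorem not_copies_orientedC4_cyclicTuranOrientation (n : ℕ) :
    ¬ Copies orientedC4 (cyclicTuranOrientation n) := by
  rintro ⟨f, -, hf⟩
  have h₀₁ := hf 0 1 (by simp [orientedC4])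
  have h₁₂ := hf 1 2 (by simp [orientedC4])
  have h₂₃ := hf 2 3 (by simp [orientedC4])
  have h₀₃ := hf 0 3 (by simp [orientedC4])
  unfold cyclicTuranOrientation at h₀₁ h₁₂ h₂₃ h₀₃
  omega

/-- for this orientation of the 4-cycle, `exo(n, F) = e(T(n,3))`. -/
theorem stmt_5 (n : ℕ) : exo n orientedC4 = eTuran n 3 := by
  refine IsGreatest.csSup_eq ⟨?_, ?_⟩
  · refine ⟨cyclicTuranOrientation n, fun v h => cyclicTuranOrientation_asymm v v h h,
      cyclicTuranOrientation_asymm, not_copies_orientedC4_cyclicTuranOrientation n, ?_⟩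
    rw [ncard_arcs_eq_ncard_edgeSet_fromRel cyclicTuranOrientation_asymm,
      fromRel_cyclicTuranOrientation, eTuran]
  · rintro m ⟨G, -, hG, hF, rfl⟩
    exact ncard_arcs_le_eTuran hG hF
end

section
/- Let 1 ≤ p ≤ q and let S_{p,q} denote the oriented star on p+q+1 vertices whose center has p in-neighbours and q out-neighbours. Then there exists N such that for all n ≥ N, exo(n, S_{p,q}) = (p−1)·n + ⌊(n+q−p)²/4⌋. -/
/-- The oriented star `S_{p,q}` on `p+q+1` vertices: the center is vertex `0`,
vertices `1,…,p` are its in-neighbours and vertices `p+1,…,p+q` its out-neighbours. -/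
def orientedStar (p q : ℕ) (i j : Fin (p + q + 1)) : Prop :=
  ((j : ℕ) = 0 ∧ 1 ≤ (i : ℕ) ∧ (i : ℕ) ≤ p) ∨ ((i : ℕ) = 0 ∧ p + 1 ≤ (j : ℕ))



/-!
In an `S_{p,q}`-free oriented graph every vertex has in-degree at most `p - 1` or out-degree
at most `q - 1`. Let `X` be the vertices of in-degree at most `p - 1` and `Y` the others. Every
arc ends in `X`, goes from `X` to `Y`, or starts in `Y`, so there are at most
`(p - 1)|X| + |X||Y| + (q - 1)|Y| = (p - 1)n + |Y|(|X| + q - p) ≤ (p - 1)n + ⌊(n + q - p)²/4⌋`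
arcs. Equality is attained by a `(p - 1)`-regular circulant on `a` vertices sending all arcs to a
`(q - 1)`-regular circulant on `b = ⌊(n + q - p)/2⌋` vertices, once `n` is large enough for both
circulants to be oriented.
-/

open Finset

lemma mul_le_add_sq_div_four (x y : ℕ) : x * y ≤ (x + y) ^ 2 / 4 := by
  rw [Nat.le_div_iff_mul_le (by norm_num)]
  zify
  nlinarith [sq_nonneg ((x : ℤ) - y)]

lemma div_two_mul_sub_div_two (s : ℕ) : s / 2 * (s - s / 2) = s ^ 2 / 4 := by
  obtain ⟨t, rfl | rfl⟩ := Nat.even_or_odd' s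
  · rw [show 2 * t / 2 = t by omega, show 2 * t - t = t by omega,
      show (2 * t) ^ 2 = 4 * (t * t) by ring, Nat.mul_div_cancel_left _ (by norm_num)]
  · rw [show (2 * t + 1) / 2 = t by omega, show 2 * t + 1 - t = t + 1 by omega,
      show (2 * t + 1) ^ 2 = 4 * (t * (t + 1)) + 1 by ring]
    omega

lemma Copies.map {α β γ : Type*} {F : α → α → Prop} {G : β → β → Prop} {H : γ → γ → Prop}
    (hFG : Copies F G) {f : β → γ} (hf : Function.Injective f)
    (hfH : ∀ u v, G u v → H (f u) (f v)) : Copies F H := by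
  obtain ⟨g, hg, hgG⟩ := hFG
  exact ⟨f ∘ g, hf.comp hg, fun a b h => hfH _ _ (hgG a b h)⟩

theorem exo_eq_of_extremal_s8 {α V : Type*} [Fintype V] {F : α → α → Prop} {n M : ℕ}
    (hV : Fintype.card V = n) {H : V → V → Prop} (hH : ∀ u v, H u v → ¬ H v u)
    (hHF : ¬ Copies F H) (hHM : {e : V × V | H e.1 e.2}.ncard = M)
    (hle : ∀ G : Fin n → Fin n → Prop, (∀ u v, G u v → ¬ G v u) → ¬ Copies F G →
      {e : Fin n × Fin n | G e.1 e.2}.ncard ≤ M) :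
    exo n F = M := by
  subst hV
  refine IsGreatest.csSup_eq ⟨?_, ?_⟩
  · set e := Fintype.equivFin V
    refine ⟨fun i j => H (e.symm i) (e.symm j), fun v h => hH _ _ h h, fun u v => hH _ _,
      fun hc => hHF (hc.map e.symm.injective fun _ _ h => h), ?_⟩
    rw [← hHM, ← Set.ncard_image_of_injective _ (e.prodCongr e).injective]
    rw [Equiv.image_eq_preimage_symm]
    rfl
  · rintro m ⟨G, -, hG, hGF, rfl⟩
    exact hle G hG hGF

section Degrees

variable {V : Type*} [Fintype V] (G : V → V → Prop) [DecidableRel G]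

def inDegree (v : V) : ℕ := #{u | G u v}

def outDegree (v : V) : ℕ := #{w | G v w}

variable {G}

lemma ncard_arcs : {e : V × V | G e.1 e.2}.ncard = #{e : V × V | G e.1 e.2} := by
  rw [Set.ncard_eq_toFinset_card', Set.toFinset_ofPred]

lemma card_arcs_from_eq_sum_outDegree (S : Finset V) :
    #{e ∈ S ×ˢ univ | G e.1 e.2} = ∑ u ∈ S, outDegree G u := by
  simp only [card_filter, sum_product, outDegree]

lemma card_arcs_into_eq_sum_inDegree (S : Finset V) :
    #{e ∈ univ ×ˢ S | G e.1 e.2} = ∑ v ∈ S, inDegree G v := by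
  simp only [card_filter, sum_product_right, inDegree]

lemma card_arcs_eq_sum_outDegree : #{e : V × V | G e.1 e.2} = ∑ u, outDegree G u := by
  rw [← card_arcs_from_eq_sum_outDegree, univ_product_univ]

theorem card_arcs_le_of_inDegree_le_or_outDegree_le {r s : ℕ} (hrs : r ≤ s)
    (h : ∀ v, inDegree G v ≤ r ∨ outDegree G v ≤ s) :
    #{e : V × V | G e.1 e.2} ≤ r * Fintype.card V + (Fintype.card V + s - r) ^ 2 / 4 := by
  classical
  set X : Finset V := {v | inDegree G v ≤ r}
  set Y : Finset V := Xᶜ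
  have hXY : #X + #Y = Fintype.card V := card_add_card_compl X
  have hcover : ({e : V × V | G e.1 e.2} : Finset (V × V)) ⊆
      {e ∈ (univ : Finset V) ×ˢ X | G e.1 e.2} ∪ X ×ˢ Y ∪
        {e ∈ Y ×ˢ (univ : Finset V) | G e.1 e.2} := by
    rintro ⟨u, v⟩ huv
    by_cases hv : v ∈ X <;> by_cases hu : u ∈ X <;> simp_all [Y]
  have hin : ∑ v ∈ X, inDegree G v ≤ #X * r :=
    sum_le_card_nsmul X _ r fun v hv => (mem_filter.1 hv).2
  have hout : ∑ u ∈ Y, outDegree G u ≤ #Y * s :=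
    sum_le_card_nsmul Y _ s fun u hu =>
      (h u).resolve_left fun hu' => mem_compl.1 hu (mem_filter.2 ⟨mem_univ u, hu'⟩)
  obtain ⟨t, rfl⟩ : ∃ t, s = r + t := ⟨s - r, by omega⟩
  calc #{e : V × V | G e.1 e.2}
      ≤ #X * r + #X * #Y + #Y * (r + t) := by
        grw [card_le_card hcover, card_union_le, card_union_le, card_product,
          card_arcs_into_eq_sum_inDegree, card_arcs_from_eq_sum_outDegree, hin, hout]
    _ = r * Fintype.card V + #Y * (#X + t) := by rw [← hXY]; ring
    _ ≤ r * Fintype.card V + (Fintype.card V + (r + t) - r) ^ 2 / 4 := by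
        rw [show Fintype.card V + (r + t) - r = #Y + (#X + t) by omega]
        grw [mul_le_add_sq_div_four #Y]

end Degrees

theorem copies_orientedStar_iff {V : Type*} [Fintype V] {G : V → V → Prop} [DecidableRel G]
    {p q : ℕ} (hG : ∀ u v, G u v → ¬ G v u) :
    Copies (orientedStar p q) G ↔ ∃ v, p ≤ inDegree G v ∧ q ≤ outDegree G v := by
  simp only [inDegree, outDegree, ← Fintype.card_subtype]
  constructor
  · rintro ⟨f, hf, hfG⟩
    have hin (k : Fin p) : G (f (Fin.castAdd q k).succ) (f 0) :=
      hfG _ _ (Or.inl ⟨rfl, by simp, by simp⟩)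
    have hout (k : Fin q) : G (f 0) (f (Fin.natAdd p k).succ) :=
      hfG _ _ (Or.inr ⟨rfl, by simp⟩)
    refine ⟨f 0, ?_, ?_⟩
    · simpa using Fintype.card_le_of_injective (fun k => (⟨_, hin k⟩ : {u // G u (f 0)}))
        fun k l hkl => by simpa using hf (congrArg Subtype.val hkl)
    · simpa using Fintype.card_le_of_injective (fun k => (⟨_, hout k⟩ : {w // G (f 0) w}))
        fun k l hkl => by simpa using hf (congrArg Subtype.val hkl)
  · rintro ⟨v, hin, hout⟩
    obtain ⟨eI⟩ := Function.Embedding.nonempty_of_card_le (α := Fin p) (by simpa using hin)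
    obtain ⟨eO⟩ := Function.Embedding.nonempty_of_card_le (α := Fin q) (by simpa using hout)
    refine ⟨(Fin.cons v (Fin.append (fun i => (eI i).1) (fun j => (eO j).1)) :
      Fin (p + q + 1) → V), ?_, ?_⟩
    · rw [Fin.cons_injective_iff, Fin.append_injective_iff]
      refine ⟨?_, Subtype.val_injective.comp eI.injective,
        Subtype.val_injective.comp eO.injective, fun i j h => hG _ _ (eI i).2 (h ▸ (eO j).2)⟩
      rintro ⟨i, hi⟩
      induction i using Fin.addCases with
      | left i =>
        have h := (eI i).2
        rw [Fin.append_left] at hi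
        rw [hi] at h
        exact hG v v h h
      | right j =>
        have h := (eO j).2
        rw [Fin.append_right] at hi
        rw [hi] at h
        exact hG v v h h
    · rintro i j (⟨hj, hi1, hip⟩ | ⟨hi, hj⟩)
      · obtain rfl : j = 0 := Fin.ext hj
        obtain ⟨k, rfl⟩ : ∃ k : Fin p, i = (Fin.castAdd q k).succ :=
          ⟨⟨i - 1, by omega⟩, Fin.ext (by simp; omega)⟩
        simpa using (eI k).2
      · obtain rfl : i = 0 := Fin.ext hi
        obtain ⟨k, rfl⟩ : ∃ k : Fin q, j = (Fin.natAdd p k).succ :=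
          ⟨⟨j - p - 1, by omega⟩, Fin.ext (by simp; omega)⟩
        simpa using (eO k).2

section Cayley

variable {Γ : Type*} [AddCommGroup Γ] (D : Finset Γ)

def cayleyDigraph (i j : Γ) : Prop := j - i ∈ D

instance [DecidableEq Γ] : DecidableRel (cayleyDigraph D) :=
  fun i j => inferInstanceAs (Decidable (j - i ∈ D))

lemma inDegree_cayleyDigraph [Fintype Γ] [DecidableEq Γ] (v : Γ) :
    inDegree (cayleyDigraph D) v = #D :=
  card_nbij' (v - ·) (v - ·)
    (fun u hu => by simpa [cayleyDigraph] using mem_filter.1 (mem_coe.1 hu))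
    (fun d hd => mem_filter.2 ⟨mem_univ _, by simpa [cayleyDigraph] using mem_coe.1 hd⟩)
    (fun u _ => by simp) (fun d _ => by simp)

lemma outDegree_cayleyDigraph [Fintype Γ] [DecidableEq Γ] (v : Γ) :
    outDegree (cayleyDigraph D) v = #D :=
  card_nbij' (· - v) (· + v)
    (fun u hu => by simpa [cayleyDigraph] using mem_filter.1 (mem_coe.1 hu))
    (fun d hd => mem_filter.2 ⟨mem_univ _, by simpa [cayleyDigraph] using mem_coe.1 hd⟩)
    (fun u _ => by simp) (fun d _ => by simp)

lemma cayleyDigraph_asymm (hD : ∀ d ∈ D, -d ∉ D) (u v : Γ) :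
    cayleyDigraph D u v → ¬ cayleyDigraph D v u := fun h h' =>
  hD _ h (by rwa [neg_sub])

end Cayley

def circulantOffsets (a r : ℕ) : Finset (Fin a) := {d | 1 ≤ (d : ℕ) ∧ (d : ℕ) ≤ r}

lemma card_circulantOffsets {a r : ℕ} (hr : r < a) : #(circulantOffsets a r) = r := by
  rw [← card_map Fin.valEmbedding, show (circulantOffsets a r).map Fin.valEmbedding = Icc 1 r by
    ext k
    simp only [circulantOffsets, mem_map, mem_filter, mem_univ, true_and, Fin.valEmbedding_apply,
      mem_Icc]
    exact ⟨by rintro ⟨d, hd, rfl⟩; exact hd, fun hk => ⟨⟨k, by omega⟩, hk, rfl⟩⟩]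
  simp

lemma neg_notMem_circulantOffsets {a r : ℕ} [NeZero a] (hr : 2 * r < a) :
    ∀ d ∈ circulantOffsets a r, -d ∉ circulantOffsets a r := by
  intro d hd hnd
  simp only [circulantOffsets, mem_filter, mem_univ, true_and, Fin.val_neg] at hd hnd
  split_ifs at hnd with h0
  · simp [h0] at hd
  · omega

section Join

variable {α β : Type*} (G : α → α → Prop) (H : β → β → Prop)

def dirJoin : α ⊕ β → α ⊕ β → Prop
  | .inl a, .inl a' => G a a'
  | .inl _, .inr _ => True
  | .inr _, .inl _ => False
  | .inr b, .inr b' => H b b'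

instance [DecidableRel G] [DecidableRel H] : DecidableRel (dirJoin G H)
  | .inl a, .inl a' => inferInstanceAs (Decidable (G a a'))
  | .inl _, .inr _ => instDecidableTrue
  | .inr _, .inl _ => instDecidableFalse
  | .inr b, .inr b' => inferInstanceAs (Decidable (H b b'))

variable {G H}

lemma dirJoin_asymm (hG : ∀ u v, G u v → ¬ G v u) (hH : ∀ u v, H u v → ¬ H v u) :
    ∀ x y, dirJoin G H x y → ¬ dirJoin G H y x
  | .inl a, .inl a' => hG a a'
  | .inl _, .inr _ => fun _ h => h
  | .inr _, .inl _ => fun h _ => h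
  | .inr b, .inr b' => hH b b'

variable [Fintype α] [Fintype β] [DecidableRel G] [DecidableRel H]

lemma card_filter_sum (P : α ⊕ β → Prop) [DecidablePred P] :
    #{x | P x} = #{a | P (.inl a)} + #{b | P (.inr b)} := by
  simp only [card_filter, Fintype.sum_sum_type]

lemma inDegree_dirJoin_inl (a : α) : inDegree (dirJoin G H) (.inl a) = inDegree G a := by
  rw [inDegree, inDegree, card_filter_sum]
  simp only [dirJoin, filter_const, ↓reduceIte, card_empty, add_zero]
  rfl

lemma outDegree_dirJoin_inl (a : α) :
    outDegree (dirJoin G H) (.inl a) = outDegree G a + Fintype.card β := by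
  rw [outDegree, outDegree, card_filter_sum]
  simp only [dirJoin, filter_const, ↓reduceIte, card_univ, Nat.add_right_cancel_iff]
  rfl

lemma outDegree_dirJoin_inr (b : β) : outDegree (dirJoin G H) (.inr b) = outDegree H b := by
  rw [outDegree, outDegree, card_filter_sum]
  simp only [dirJoin, filter_const, ↓reduceIte, card_empty, zero_add]
  rfl

lemma card_arcs_dirJoin :
    #{e : (α ⊕ β) × (α ⊕ β) | dirJoin G H e.1 e.2} =
      #{e : α × α | G e.1 e.2} + Fintype.card α * Fintype.card β + #{e : β × β | H e.1 e.2} := by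
  simp only [card_arcs_eq_sum_outDegree, Fintype.sum_sum_type, outDegree_dirJoin_inl,
    outDegree_dirJoin_inr, sum_add_distrib, sum_const, card_univ, smul_eq_mul]

end Join

section CirculantJoin

variable (a b r s : ℕ) [NeZero a] [NeZero b]

abbrev circulantJoin : Fin a ⊕ Fin b → Fin a ⊕ Fin b → Prop :=
  dirJoin (cayleyDigraph (circulantOffsets a r)) (cayleyDigraph (circulantOffsets b s))

variable {a b r s}

lemma circulantJoin_asymm (hr : 2 * r < a) (hs : 2 * s < b) :
    ∀ x y, circulantJoin a b r s x y → ¬ circulantJoin a b r s y x :=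
  dirJoin_asymm (cayleyDigraph_asymm _ (neg_notMem_circulantOffsets hr))
    (cayleyDigraph_asymm _ (neg_notMem_circulantOffsets hs))

lemma circulantJoin_inDegree_le_or_outDegree_le (hr : r < a) (hs : s < b) :
    ∀ x, inDegree (circulantJoin a b r s) x ≤ r ∨ outDegree (circulantJoin a b r s) x ≤ s
  | .inl i => .inl (by
      rw [inDegree_dirJoin_inl, inDegree_cayleyDigraph, card_circulantOffsets hr])
  | .inr j => .inr (by
      rw [outDegree_dirJoin_inr, outDegree_cayleyDigraph, card_circulantOffsets hs])

lemma ncard_arcs_circulantJoin (hr : r < a) (hs : s < b) :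
    {e : (Fin a ⊕ Fin b) × (Fin a ⊕ Fin b) | circulantJoin a b r s e.1 e.2}.ncard =
      a * r + a * b + b * s := by
  rw [ncard_arcs, card_arcs_dirJoin, card_arcs_eq_sum_outDegree, card_arcs_eq_sum_outDegree]
  simp [outDegree_cayleyDigraph, card_circulantOffsets hr, card_circulantOffsets hs]

end CirculantJoin

theorem card_arcs_le_of_not_copies_orientedStar {V : Type*} [Fintype V] {G : V → V → Prop}
    [DecidableRel G] {p q : ℕ} (hp : 1 ≤ p) (hpq : p ≤ q) (hG : ∀ u v, G u v → ¬ G v u)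
    (hGF : ¬ Copies (orientedStar p q) G) :
    #{e : V × V | G e.1 e.2} ≤ (p - 1) * Fintype.card V + (Fintype.card V + q - p) ^ 2 / 4 := by
  have h := card_arcs_le_of_inDegree_le_or_outDegree_le (G := G) (r := p - 1) (s := q - 1)
    (by omega) fun v => by
      by_contra! h
      exact hGF ((copies_orientedStar_iff hG).2 ⟨v, by omega, by omega⟩)
  rwa [show Fintype.card V + (q - 1) - (p - 1) = Fintype.card V + q - p by omega] at h

/-- for `1 ≤ p ≤ q` and sufficiently large `n`,
`exo(n, S_{p,q}) = (p-1)·n + ⌊(n+q-p)²/4⌋`. -/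
theorem stmt_8 (p q : ℕ) (hp : 1 ≤ p) (hpq : p ≤ q) :
    ∃ N : ℕ, ∀ n ≥ N, exo n (orientedStar p q) = (p - 1) * n + (n + q - p) ^ 2 / 4 := by
  refine ⟨4 * (p + q) + 8, fun n hn => ?_⟩
  classical
  set b := (n + q - p) / 2 with hb
  set a := n - b
  have : NeZero a := ⟨by omega⟩
  have : NeZero b := ⟨by omega⟩
  have hr : 2 * (p - 1) < a := by omega
  have hs : 2 * (q - 1) < b := by omega
  refine exo_eq_of_extremal_s8 (by simp; omega) (circulantJoin_asymm hr hs) ?_ ?_ fun G hG hGF => ?_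
  · rw [copies_orientedStar_iff (circulantJoin_asymm hr hs)]
    rintro ⟨x, hin, hout⟩
    have := circulantJoin_inDegree_le_or_outDegree_le (r := p - 1) (s := q - 1)
      (by omega) (by omega) x
    omega
  · rw [ncard_arcs_circulantJoin (by omega) (by omega), ← div_two_mul_sub_div_two, ← hb]
    have hn' : n = a + b := by omega
    obtain ⟨t, rfl⟩ : ∃ t, q = p + t := ⟨q - p, by omega⟩
    rw [show n + (p + t) - p - b = a + t by omega, show p + t - 1 = p - 1 + t by omega, hn']
    ring
  · rw [ncard_arcs]
    simpa using card_arcs_le_of_not_copies_orientedStar hp hpq hG hGF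
end
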